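/- Let i and j be even natural numbers. Then ∫_0^Ω Sn(θ)^i · Cs(θ)^j dθ = (2/l^{(i+1)/2}) · Γ((i+1)/2) · Γ((j+1)/(2l)) / Γ((i+1)/2 + (j+1)/(2l)). -/

import Mathlib

open intervalIntegral

/-- The period Ω of the generalized trigonometric functions with p = 1, q = l. -/
noncomputable def Omega (l : ℕ) : ℝ :=
  2 * (l : ℝ) ^ (-(1 / 2 : ℝ)) * Real.Gamma (1 / 2) * Real.Gamma (1 / (2 * (l : ℝ))) /
    Real.Gamma (1 / 2 + 1 / (2 * (l : ℝ)))

/-!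
The energy `l Sn² + Cs^{2l}` is conserved, so the orbit `θ ↦ (Cs θ, Sn θ)` stays in the unit
ball, where the polynomial vector field `(c, s) ↦ (-s, c^{2l-1})` is Lipschitz. By uniqueness of
solutions the orbit is symmetric under `θ ↦ 2T - θ`, where `T` is the first positive zero of `Cs`,
and under `θ ↦ 4T - θ`; for even `i, j` this folds the integral over `[0, 4T]` into four copies
of the integral over `[0, T]`. On `[0, T]` the substitution `t = Cs^{2l}`, for which
`1 - t = l Sn²`, turns the integral into the Beta integral
`B((i+1)/2, (j+1)/(2l)) / (2 l^{(i+1)/2})`; its case `i = j = 0` says that `4T = Ω`.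
-/

open Set MeasureTheory

theorem ODE_solution_unique_of_contDiff_of_isCompact {E : Type*} [NormedAddCommGroup E]
    [NormedSpace ℝ E] {v : E → E} (hv : ContDiff ℝ 1 v) {K : Set E} (hK : IsCompact K)
    {f g : ℝ → E} (hf : ∀ t, HasDerivAt f (v (f t)) t ∧ f t ∈ K)
    (hg : ∀ t, HasDerivAt g (v (g t)) t ∧ g t ∈ K) {t₀ : ℝ} (heq : f t₀ = g t₀) : f = g :=
  have ⟨_, hC⟩ := hv.locallyLipschitz.locallyLipschitzOn.exists_lipschitzOnWith_of_compact hK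
  ODE_solution_unique_univ (v := fun _ => v) (s := fun _ => K) (fun _ => hC) hf hg heq

theorem integral_Icc_rpow_mul_one_sub_rpow {a b : ℝ} (ha : 0 < a) (hb : 0 < b) :
    ∫ x in Icc (0 : ℝ) 1, x ^ (a - 1) * (1 - x) ^ (b - 1) =
      Real.Gamma a * Real.Gamma b / Real.Gamma (a + b) := by
  rw [← ProbabilityTheory.beta, ProbabilityTheory.beta_eq_betaIntegralReal a b ha hb,
    Complex.betaIntegral, integral_of_le zero_le_one, integral_Icc_eq_integral_Ioc,
    ← RCLike.re_to_complex, ← integral_re]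
  · refine setIntegral_congr_fun measurableSet_Ioc fun x ⟨hx0, hx1⟩ ↦ ?_
    norm_cast
    rw [← Complex.ofReal_cpow hx0.le, ← Complex.ofReal_cpow (by linarith), RCLike.re_to_complex,
      ← Complex.ofReal_mul, Complex.ofReal_re]
  · exact (intervalIntegrable_iff_integrableOn_Ioc_of_le zero_le_one).mp
      (Complex.betaIntegral_convergent (by simpa) (by simpa))

theorem integral_zero_two_mul_of_apply_two_mul_sub {f : ℝ → ℝ} {a : ℝ}
    (hf : ∀ x, f (2 * a - x) = f x) (hint : IntervalIntegrable f volume 0 (2 * a)) :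
    ∫ x in 0..2 * a, f x = 2 * ∫ x in 0..a, f x := by
  have ha : a ∈ uIcc 0 (2 * a) := by
    rcases le_total 0 a with h | h
    · exact mem_uIcc.2 (Or.inl ⟨h, by linarith⟩)
    · exact mem_uIcc.2 (Or.inr ⟨by linarith, h⟩)
  have hsecond : ∫ x in a..2 * a, f x = ∫ x in 0..a, f x := by
    simpa only [hf, sub_self, show 2 * a - a = a by ring] using
      integral_comp_sub_left (a := a) (b := 2 * a) f (2 * a)
  rw [← integral_add_adjacent_intervals (hint.mono_set (uIcc_subset_uIcc_left ha))
    (hint.mono_set (uIcc_subset_uIcc_right ha)), hsecond, two_mul]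

theorem exists_pos_eq_zero_forall_Ico_pos {f : ℝ → ℝ} (hf : Continuous f) (h0 : 0 < f 0)
    {x : ℝ} (hx : 0 ≤ x) (hfx : f x ≤ 0) : ∃ T, 0 < T ∧ f T = 0 ∧ ∀ θ ∈ Ico 0 T, 0 < f θ := by
  set S := {y | 0 ≤ y ∧ f y = 0}
  obtain ⟨z, hz, hfz⟩ := intermediate_value_Icc' hx hf.continuousOn ⟨hfx, h0.le⟩
  have hbdd : BddBelow S := ⟨0, fun y hy => hy.1⟩
  have hT : sInf S ∈ S := ((isClosed_le continuous_const continuous_id).inter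
    (isClosed_eq hf continuous_const)).csInf_mem ⟨z, hz.1, hfz⟩ hbdd
  refine ⟨sInf S, hT.1.lt_of_ne fun hT0 => h0.ne' (hT0 ▸ hT.2), hT.2, fun θ hθ => ?_⟩
  by_contra! hfθ
  obtain ⟨w, hw, hfw⟩ := intermediate_value_Icc' hθ.1 hf.continuousOn ⟨hfθ, h0.le⟩
  linarith [csInf_le hbdd ⟨hw.1, hfw⟩, hw.2, hθ.2]

theorem jacobian_mul_beta_integrand_eq {l : ℕ} (hl : l ≠ 0) {c s A B : ℝ} (hc : 0 < c)
    (hs : 0 < s) {i j : ℕ} (hA : 2 * l * A = j + 1) (hB : 2 * B = i + 1) :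
    (2 * l : ℕ) * c ^ (2 * l - 1) * s * ((c ^ (2 * l)) ^ (A - 1) * (l * s ^ 2) ^ (B - 1)) =
      2 * (l : ℝ) ^ B * (s ^ i * c ^ j) := by
  have hl0 : (0 : ℝ) < l := by positivity
  have hc_pow : c ^ (2 * l - 1) * (c ^ (2 * l)) ^ (A - 1) = c ^ j := by
    rw [← Real.rpow_natCast c (2 * l), ← Real.rpow_mul hc.le, ← Real.rpow_natCast c,
      ← Real.rpow_add hc, ← Real.rpow_natCast c j, Nat.cast_sub (by omega)]
    congr 1
    push_cast
    linear_combination hA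
  have hs_pow : s * (s ^ 2) ^ (B - 1) = s ^ i := by
    rw [← Real.rpow_natCast s 2, ← Real.rpow_mul hs.le, ← Real.rpow_natCast s i]
    calc s * s ^ ((2 : ℕ) * (B - 1)) = s ^ (1 + (2 : ℕ) * (B - 1)) := by
          rw [Real.rpow_add hs, Real.rpow_one]
      _ = s ^ (i : ℝ) := by push_cast; congr 1; linear_combination hB
  rw [Real.mul_rpow hl0.le (sq_nonneg s), Real.rpow_sub_one hl0.ne', ← hc_pow, ← hs_pow]
  push_cast
  field_simp

structure IsLyapunovTrig (l : ℕ) (Cs Sn : ℝ → ℝ) : Prop where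
  hasDerivAt_Cs : ∀ θ, HasDerivAt Cs (-(Sn θ)) θ
  hasDerivAt_Sn : ∀ θ, HasDerivAt Sn (Cs θ ^ (2 * l - 1)) θ
  Cs_zero : Cs 0 = 1
  Sn_zero : Sn 0 = 0

namespace IsLyapunovTrig

variable {l : ℕ} {Cs Sn : ℝ → ℝ}

theorem continuous_Cs (h : IsLyapunovTrig l Cs Sn) : Continuous Cs :=
  continuous_iff_continuousAt.2 fun θ => (h.hasDerivAt_Cs θ).continuousAt

theorem continuous_Sn (h : IsLyapunovTrig l Cs Sn) : Continuous Sn :=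
  continuous_iff_continuousAt.2 fun θ => (h.hasDerivAt_Sn θ).continuousAt

theorem mul_Sn_sq_add_Cs_pow (h : IsLyapunovTrig l Cs Sn) (θ : ℝ) :
    l * Sn θ ^ 2 + Cs θ ^ (2 * l) = 1 := by
  have hderiv : ∀ x, HasDerivAt (fun θ => l * Sn θ ^ 2 + Cs θ ^ (2 * l)) 0 x := fun x => by
    refine ((((h.hasDerivAt_Sn x).fun_pow 2).const_mul (l : ℝ)).add
      ((h.hasDerivAt_Cs x).fun_pow (2 * l))).congr_deriv ?_
    push_cast
    ring
  simpa [h.Cs_zero, h.Sn_zero] using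
    is_const_of_deriv_eq_zero (fun x => (hderiv x).differentiableAt) (fun x => (hderiv x).deriv) θ 0

theorem abs_Cs_le_one (h : IsLyapunovTrig l Cs Sn) (hl : l ≠ 0) (θ : ℝ) : |Cs θ| ≤ 1 := by
  have hpow : |Cs θ| ^ (2 * l) ≤ 1 := by
    rw [pow_abs, abs_of_nonneg (Even.pow_nonneg ⟨l, two_mul l⟩ _)]
    nlinarith [h.mul_Sn_sq_add_Cs_pow θ, sq_nonneg (Sn θ), (Nat.cast_nonneg l : (0 : ℝ) ≤ l)]
  exact (pow_le_one_iff_of_nonneg (abs_nonneg _) (by omega)).mp hpow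

theorem abs_Sn_le_one (h : IsLyapunovTrig l Cs Sn) (hl : l ≠ 0) (θ : ℝ) : |Sn θ| ≤ 1 := by
  have hl1 : (1 : ℝ) ≤ l := by exact_mod_cast Nat.one_le_iff_ne_zero.2 hl
  have : Sn θ ^ 2 ≤ 1 := by
    nlinarith [h.mul_Sn_sq_add_Cs_pow θ, sq_nonneg (Sn θ), Even.pow_nonneg ⟨l, two_mul l⟩ (Cs θ)]
  exact abs_le_one_iff_mul_self_le_one.2 (by nlinarith)

/-- `θ ↦ (ε Cs (2a - θ), -ε Sn (2a - θ))` solves the same ODE as `(Cs, Sn)` (the exponent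
`2l - 1` is odd), so the two curves agree once they meet at `θ = a`. -/
theorem reflection_eq (h : IsLyapunovTrig l Cs Sn) (hl : l ≠ 0) {ε a : ℝ}
    (hε : ε = 1 ∨ ε = -1) (hCa : ε * Cs a = Cs a) (hSa : -(ε * Sn a) = Sn a) (θ : ℝ) :
    ε * Cs (2 * a - θ) = Cs θ ∧ -(ε * Sn (2 * a - θ)) = Sn θ := by
  have hεpow : ∀ x : ℝ, (ε * x) ^ (2 * l - 1) = ε * x ^ (2 * l - 1) := fun x => by
    rcases hε with rfl | rfl
    · simp
    · simp [Odd.neg_pow (⟨l - 1, by omega⟩ : Odd (2 * l - 1))]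
  have hε_abs : |ε| = 1 := by rcases hε with rfl | rfl <;> simp
  have hv : ContDiff ℝ 1 fun p : ℝ × ℝ => (-p.2, p.1 ^ (2 * l - 1)) := by fun_prop
  have hmem : ∀ θ, (Cs θ, Sn θ) ∈ Metric.closedBall 0 1 := fun θ => by
    simp [Prod.norm_def, h.abs_Cs_le_one hl, h.abs_Sn_le_one hl]
  have hsol := ODE_solution_unique_of_contDiff_of_isCompact hv (isCompact_closedBall 0 1)
    (t₀ := a) (f := fun θ => (ε * Cs (2 * a - θ), -(ε * Sn (2 * a - θ))))
    (g := fun θ => (Cs θ, Sn θ))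
    (fun θ => by
      have hrev : HasDerivAt (fun θ => 2 * a - θ) (-1) θ := by
        simpa using (hasDerivAt_id θ).const_sub (2 * a)
      refine ⟨((((h.hasDerivAt_Cs _).comp θ hrev).const_mul ε).prodMk
        (((h.hasDerivAt_Sn _).comp θ hrev).const_mul ε).neg).congr_deriv ?_, ?_⟩
      · simp only [hεpow]; ext <;> simp
      · simpa [Prod.norm_def, abs_mul, hε_abs] using hmem (2 * a - θ))
    (fun θ => ⟨(h.hasDerivAt_Cs θ).prodMk (h.hasDerivAt_Sn θ), hmem θ⟩)
    (by simp [two_mul, hCa, hSa])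
  exact Prod.ext_iff.1 (congrFun hsol θ)

theorem Sn_pow_mul_Cs_pow_two_mul_sub (h : IsLyapunovTrig l Cs Sn) (hl : l ≠ 0) {i j : ℕ}
    (hi : Even i) (hj : Even j) {a : ℝ} (ha : Cs a = 0 ∨ Sn a = 0) (θ : ℝ) :
    Sn (2 * a - θ) ^ i * Cs (2 * a - θ) ^ j = Sn θ ^ i * Cs θ ^ j := by
  rcases ha with ha | ha
  · obtain ⟨hC, hS⟩ := h.reflection_eq hl (Or.inr rfl) (a := a) (by simp [ha]) (by ring) θ
    simp only [← hC, ← hS, neg_one_mul, neg_neg, hj.neg_pow]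
  · obtain ⟨hC, hS⟩ := h.reflection_eq hl (Or.inl rfl) (a := a) (by ring) (by simp [ha]) θ
    simp only [← hC, ← hS, one_mul, hi.neg_pow]

theorem Sn_two_mul_of_Cs_eq_zero (h : IsLyapunovTrig l Cs Sn) (hl : l ≠ 0) {a : ℝ}
    (ha : Cs a = 0) : Sn (2 * a) = 0 := by
  simpa [h.Sn_zero] using (h.reflection_eq hl (Or.inr rfl) (by simp [ha]) (by ring) 0).2

theorem strictMonoOn_Sn (h : IsLyapunovTrig l Cs Sn) {D : Set ℝ} (hD : Convex ℝ D)
    (hpos : ∀ θ ∈ interior D, 0 < Cs θ) : StrictMonoOn Sn D :=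
  strictMonoOn_of_deriv_pos hD h.continuous_Sn.continuousOn fun θ hθ =>
    (h.hasDerivAt_Sn θ).deriv ▸ pow_pos (hpos θ hθ) _

/-- If `Cs` stayed positive, `Sn` would increase, so on `[1, ∞)` the function `Cs` would
decrease with slope at most `-Sn 1 < 0`. -/
theorem exists_Cs_nonpos (h : IsLyapunovTrig l Cs Sn) : ∃ x, 0 ≤ x ∧ Cs x ≤ 0 := by
  by_contra! hCs_pos
  have hmono : StrictMonoOn Sn (Ici 0) :=
    h.strictMonoOn_Sn (convex_Ici 0) fun θ hθ => hCs_pos θ (interior_subset hθ)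
  have hSn_one : 0 < Sn 1 := h.Sn_zero ▸ hmono self_mem_Ici (mem_Ici.2 zero_le_one) zero_lt_one
  set x := 1 + Cs 1 / Sn 1
  have hx : 1 ≤ x := le_add_of_nonneg_right (div_nonneg (hCs_pos 1 zero_le_one).le hSn_one.le)
  have hdecay : Cs x - Cs 1 ≤ -Sn 1 * (x - 1) := by
    refine (convex_Ici 1).image_sub_le_mul_sub_of_deriv_le h.continuous_Cs.continuousOn
      (fun θ _ => (h.hasDerivAt_Cs θ).differentiableAt.differentiableWithinAt)
      (fun θ hθ => ?_) 1 self_mem_Ici x hx hx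
    rw [interior_Ici] at hθ
    rw [(h.hasDerivAt_Cs θ).deriv, neg_le_neg_iff]
    exact (hmono.le_iff_le (by simp) (mem_Ici.2 (zero_le_one.trans hθ.le))).2 hθ.le
  have : x - 1 = Cs 1 / Sn 1 := by ring
  rw [this, neg_mul, mul_div_cancel₀ _ hSn_one.ne'] at hdecay
  linarith [hCs_pos x (zero_le_one.trans hx)]

theorem exists_quarter_period (h : IsLyapunovTrig l Cs Sn) :
    ∃ T, 0 < T ∧ Cs T = 0 ∧ ∀ θ ∈ Ico 0 T, 0 < Cs θ :=
  have ⟨_, hx, hCsx⟩ := h.exists_Cs_nonpos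
  exists_pos_eq_zero_forall_Ico_pos h.continuous_Cs (h.Cs_zero ▸ one_pos) hx hCsx

theorem integral_Sn_pow_mul_Cs_pow_quarter (h : IsLyapunovTrig l Cs Sn) (hl : l ≠ 0) {T : ℝ}
    (hT : 0 ≤ T) (hCsT : Cs T = 0) (hpos : ∀ θ ∈ Ioo 0 T, 0 < Cs θ) (i j : ℕ) :
    ∫ θ in 0..T, Sn θ ^ i * Cs θ ^ j =
      Real.Gamma (((i : ℝ) + 1) / 2) * Real.Gamma (((j : ℝ) + 1) / (2 * l)) /
        (2 * (l : ℝ) ^ (((i : ℝ) + 1) / 2) *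
          Real.Gamma (((i : ℝ) + 1) / 2 + ((j : ℝ) + 1) / (2 * l))) := by
  set A : ℝ := ((j : ℝ) + 1) / (2 * l) with hA
  set B : ℝ := ((i : ℝ) + 1) / 2
  have hSn_pos : ∀ θ ∈ Ioo 0 T, 0 < Sn θ := fun θ hθ =>
    h.Sn_zero ▸ h.strictMonoOn_Sn (convex_Icc 0 T) (by rwa [interior_Icc])
      (left_mem_Icc.2 hT) (Ioo_subset_Icc_self hθ) hθ.1
  have hsubst := integral_Icc_deriv_smul_of_deriv_nonpos (a := 0) (b := T)
    (f := fun θ => Cs θ ^ (2 * l)) (f' := fun θ => (2 * l : ℕ) * Cs θ ^ (2 * l - 1) * -Sn θ)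
    (g := fun u => u ^ (A - 1) * (1 - u) ^ (B - 1)) (h.continuous_Cs.pow _).continuousOn
    (fun θ _ => (h.hasDerivAt_Cs θ).pow _)
    (fun θ hθ => mul_nonpos_of_nonneg_of_nonpos (by positivity [hpos θ hθ])
      (neg_nonpos.2 (hSn_pos θ hθ).le)) hT
  simp only [hCsT, h.Cs_zero, zero_pow (by omega : 2 * l ≠ 0), one_pow, smul_eq_mul] at hsubst
  rw [integral_Icc_rpow_mul_one_sub_rpow (by positivity) (by positivity)] at hsubst
  have hintegrand : ∀ θ ∈ Ioo 0 T, Sn θ ^ i * Cs θ ^ j =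
      -(2 * (l : ℝ) ^ B)⁻¹ * ((2 * l : ℕ) * Cs θ ^ (2 * l - 1) * -Sn θ *
        ((Cs θ ^ (2 * l)) ^ (A - 1) * (1 - Cs θ ^ (2 * l)) ^ (B - 1))) := fun θ hθ => by
    rw [show 1 - Cs θ ^ (2 * l) = l * Sn θ ^ 2 by linarith [h.mul_Sn_sq_add_Cs_pow θ]]
    simp only [mul_neg, neg_mul, neg_neg]
    rw [jacobian_mul_beta_integrand_eq hl (hpos θ hθ) (hSn_pos θ hθ) (i := i) (j := j)
        (by rw [hA]; field_simp) (by ring), inv_mul_cancel_left₀ (by positivity)]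
  calc ∫ θ in 0..T, Sn θ ^ i * Cs θ ^ j = ∫ θ in Ioo 0 T, Sn θ ^ i * Cs θ ^ j := by
        rw [integral_of_le hT, integral_Ioc_eq_integral_Ioo]
    _ = _ := by
        rw [setIntegral_congr_fun measurableSet_Ioo hintegrand, MeasureTheory.integral_const_mul,
          ← integral_Icc_eq_integral_Ioo, hsubst, add_comm A]
        field_simp

theorem Omega_eq_four_mul (h : IsLyapunovTrig l Cs Sn) (hl : l ≠ 0) {T : ℝ} (hT : 0 ≤ T)
    (hCsT : Cs T = 0) (hpos : ∀ θ ∈ Ioo 0 T, 0 < Cs θ) : Omega l = 4 * T := by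
  have hT_eq := h.integral_Sn_pow_mul_Cs_pow_quarter hl hT hCsT hpos 0 0
  simp only [pow_zero, mul_one, intervalIntegral.integral_const, sub_zero, smul_eq_mul,
    CharP.cast_eq_zero, zero_add] at hT_eq
  rw [Omega, hT_eq, Real.rpow_neg (Nat.cast_nonneg l)]
  field_simp
  ring

end IsLyapunovTrig

theorem integral_SnCs_even (l : ℕ) (hl : 2 ≤ l) (Cs Sn : ℝ → ℝ)
    (hCs : ∀ θ : ℝ, HasDerivAt Cs (-(Sn θ)) θ)
    (hSn : ∀ θ : ℝ, HasDerivAt Sn (Cs θ ^ (2 * l - 1)) θ)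
    (hCs0 : Cs 0 = 1) (hSn0 : Sn 0 = 0)
    (i j : ℕ) (hi : Even i) (hj : Even j) :
    ∫ θ in (0 : ℝ)..(Omega l), Sn θ ^ i * Cs θ ^ j =
      2 / (l : ℝ) ^ (((i : ℝ) + 1) / 2) * Real.Gamma (((i : ℝ) + 1) / 2) *
        Real.Gamma (((j : ℝ) + 1) / (2 * (l : ℝ))) /
        Real.Gamma (((i : ℝ) + 1) / 2 + ((j : ℝ) + 1) / (2 * (l : ℝ))) := by
  have h : IsLyapunovTrig l Cs Sn := ⟨hCs, hSn, hCs0, hSn0⟩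
  have hl0 : l ≠ 0 := by omega
  obtain ⟨T, hT, hCsT, hpos⟩ := h.exists_quarter_period
  have hpos' : ∀ θ ∈ Ioo 0 T, 0 < Cs θ := fun θ hθ => hpos θ (Ioo_subset_Ico_self hθ)
  have hcont : Continuous fun θ => Sn θ ^ i * Cs θ ^ j :=
    (h.continuous_Sn.pow i).mul (h.continuous_Cs.pow j)
  rw [h.Omega_eq_four_mul hl0 hT.le hCsT hpos', show 4 * T = 2 * (2 * T) by ring,
    integral_zero_two_mul_of_apply_two_mul_sub
      (h.Sn_pow_mul_Cs_pow_two_mul_sub hl0 hi hj (Or.inr (h.Sn_two_mul_of_Cs_eq_zero hl0 hCsT)))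
      (hcont.intervalIntegrable _ _),
    integral_zero_two_mul_of_apply_two_mul_sub
      (h.Sn_pow_mul_Cs_pow_two_mul_sub hl0 hi hj (Or.inl hCsT)) (hcont.intervalIntegrable _ _),
    h.integral_Sn_pow_mul_Cs_pow_quarter hl0 hT.le hCsT hpos']
  field_simp
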